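/- arXiv:2204.13936 — 2 statements merged into one kernel-verified Lean document; each statement's English description precedes it below -/
import Mathlib

section
/- Let r be even, s ≥ 3, t = r/2, and let H = Θ_t^r(ℓ_1,…,ℓ_s) be the r-uniform theta hypergraph with ℓ_1 ≤ ℓ_2 ≤ … ≤ ℓ_s. Then χ^e(H) = 3 if ℓ_1 = 1 and ℓ_i ≡ 1 (mod 4) for all 2 ≤ i ≤ s; χ^e(H) = 1 if ℓ_i = 2 for all 1 ≤ i ≤ s; and χ^e(H) = 2 otherwise. -/
open Finset

open Classical in
/-- `σ^e(v) = Σ_{e ∋ v} w(e)` for a hypergraph with edge set `E`. -/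
noncomputable def sigmaE {V : Type*} [Fintype V] (E : Finset (Finset V))
    (w : Finset V → ℕ) (v : V) : ℕ :=
  ∑ e ∈ E.filter (fun e => v ∈ e), w e

/-- The hypergraph with edge set `E` admits an edge weighting with weights in
`{1,…,k}` such that `σ^e` is a proper vertex coloring: every edge with at least
two vertices contains two vertices with distinct colors. -/
def HasNSDEdgeWeighting {V : Type*} [Fintype V] (E : Finset (Finset V)) (k : ℕ) : Prop :=
  ∃ w : Finset V → ℕ, (∀ e ∈ E, 1 ≤ w e ∧ w e ≤ k) ∧
    ∀ e ∈ E, 2 ≤ e.card → ∃ u ∈ e, ∃ v ∈ e, sigmaE E w u ≠ sigmaE E w v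

/-- The vertex type of the `r`-uniform `t`-tight theta hypergraph
`Θ_t^r(L 0, …, L (s-1))`: `t` common initial vertices `x_1,…,x_t`,
`t` common final vertices `y_1,…,y_t`, and for each path `i` its
`L i * (r-t) - t` internal vertices. -/
def ThetaVert (r t s : ℕ) (L : Fin s → ℕ) : Type :=
  (Fin t ⊕ Fin t) ⊕ (Σ i : Fin s, Fin (L i * (r - t) - t))

instance (r t s : ℕ) (L : Fin s → ℕ) : Fintype (ThetaVert r t s L) := by
  unfold ThetaVert; infer_instance

instance (r t s : ℕ) (L : Fin s → ℕ) : DecidableEq (ThetaVert r t s L) := by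
  unfold ThetaVert; infer_instance

/-- Membership of a vertex of the theta hypergraph in the `m`-th edge
(0-indexed, `m < L i`) of the `i`-th path.  In the `i`-th path, the vertex
`x_a` has (0-indexed) position `a`, the vertex `y_b` has position
`L i * (r-t) + b`, and the `c`-th internal vertex of path `i` has position
`t + c`; the `m`-th edge consists of the vertices at positions
`m*(r-t), …, m*(r-t) + r - 1`. -/
def thetaMem (r t : ℕ) {s : ℕ} (L : Fin s → ℕ) (i : Fin s) (m : ℕ) :
    ThetaVert r t s L → Prop
  | Sum.inl (Sum.inl a) =>
      m * (r - t) ≤ (a : ℕ) ∧ (a : ℕ) < m * (r - t) + r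
  | Sum.inl (Sum.inr b) =>
      m * (r - t) ≤ L i * (r - t) + (b : ℕ) ∧ L i * (r - t) + (b : ℕ) < m * (r - t) + r
  | Sum.inr ⟨i', c⟩ =>
      i' = i ∧ m * (r - t) ≤ t + (c : ℕ) ∧ t + (c : ℕ) < m * (r - t) + r

open Classical in
/-- The edge set of the `r`-uniform `t`-tight theta hypergraph with `s` paths of
lengths `L 0, …, L (s-1)`. -/
noncomputable def thetaEdges (r t : ℕ) {s : ℕ} (L : Fin s → ℕ) :
    Finset (Finset (ThetaVert r t s L)) :=
  (Finset.univ : Finset (Σ i : Fin s, Fin (L i))).image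
    (fun p => Finset.univ.filter (fun v => thetaMem r t L p.1 (p.2 : ℕ) v))

/-!
Since `t = r / 2`, the vertices of each path split into blocks of `t` consecutive vertices
(`x_1, …, x_t` being block `0` and `y_1, …, y_t` block `ℓ_i` of path `i`), and the `m`-th edge of
path `i` is the union of blocks `m` and `m + 1`. All vertices of a block receive the same `σ^e`:
the sum of the weights of all first edges, of all last edges, or of the two edges of the path
meeting there. So a weighting is proper iff consecutive block sums differ along every path.

With weights in `{1, 2}`, interior blocks force `w(e_{m+2}) = 3 - w(e_m)`, so the weights along a
path are 4-periodic. If `ℓ_1 = 1` and all other `ℓ_i ≡ 1 (mod 4)`, the last edge of every path then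
has the weight of its first edge, so the sums at `x` and at `y` coincide, which the single edge of
the first path forbids; two weights `3` repair this. Otherwise a 4-periodic weighting in `{1, 2}`
works, and the constant weighting `1` works exactly when all `ℓ_i = 2`.
-/

namespace Theta

theorem mul_le_and_lt_add_two_mul_iff {t : ℕ} (ht : 0 < t) (m p : ℕ) :
    (m * t ≤ p ∧ p < m * t + 2 * t) ↔ (p / t = m ∨ p / t = m + 1) := by
  rw [← Nat.le_div_iff_mul_le ht, show m * t + 2 * t = (m + 2) * t by ring,
    ← Nat.div_lt_iff_lt_mul ht]
  omega

theorem sum_ite_two_one {ι : Type*} [Fintype ι] (p : ι → Prop) [DecidablePred p] :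
    ∑ i, (if p i then 2 else 1) = Fintype.card ι + #{i | p i} := by
  calc ∑ i, (if p i then 2 else 1) = ∑ i, (1 + if p i then 1 else 0) :=
        sum_congr rfl fun i _ => by split_ifs <;> rfl
    _ = _ := by simp [sum_add_distrib, sum_boole]

section PathWeighting

variable {s : ℕ}

/-- For weights `W i m` of the `m`-th edges of the paths, the common `σ^e`-value of the vertices
in block `b ≤ L i` of path `i`. -/
def blockSum (L : Fin s → ℕ) (W : Fin s → ℕ → ℕ) (i : Fin s) (b : ℕ) : ℕ :=
  if b = 0 then ∑ j, W j 0 else if b = L i then ∑ j, W j (L j - 1) else W i (b - 1) + W i b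

structure IsProperPathWeighting (L : Fin s → ℕ) (k : ℕ) (W : Fin s → ℕ → ℕ) : Prop where
  weight_mem : ∀ i, ∀ m < L i, W i m ∈ Icc 1 k
  blockSum_ne : ∀ i, ∀ m < L i, blockSum L W i m ≠ blockSum L W i (m + 1)

variable {L : Fin s → ℕ} {W : Fin s → ℕ → ℕ} {k : ℕ}

theorem IsProperPathWeighting.mono {k' : ℕ} (h : IsProperPathWeighting L k W) (hk : k ≤ k') :
    IsProperPathWeighting L k' W :=
  ⟨fun i m hm => Icc_subset_Icc le_rfl hk (h.weight_mem i m hm), h.blockSum_ne⟩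

theorem not_isProperPathWeighting_zero {i : Fin s} (hi : 1 ≤ L i) :
    ¬ IsProperPathWeighting L 0 W := fun h => by
  simpa using h.weight_mem i 0 hi

theorem blockSum_zero (i : Fin s) : blockSum L W i 0 = ∑ j, W j 0 := if_pos rfl

theorem blockSum_self {i : Fin s} (hi : L i ≠ 0) : blockSum L W i (L i) = ∑ j, W j (L j - 1) := by
  rw [blockSum, if_neg hi, if_pos rfl]

theorem blockSum_of_lt {i : Fin s} {b : ℕ} (hb₀ : b ≠ 0) (hb : b < L i) :
    blockSum L W i b = W i (b - 1) + W i b := by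
  rw [blockSum, if_neg hb₀, if_neg hb.ne]

theorem blockSum_ne_iff (hL : ∀ i, 1 ≤ L i) :
    (∀ i, ∀ m < L i, blockSum L W i m ≠ blockSum L W i (m + 1)) ↔
      (∀ i, L i = 1 → ∑ j, W j 0 ≠ ∑ j, W j (L j - 1)) ∧
      (∀ i, 2 ≤ L i → ∑ j, W j 0 ≠ W i 0 + W i 1) ∧
      (∀ i, ∀ m, m + 2 < L i → W i m ≠ W i (m + 2)) ∧
      (∀ i, 2 ≤ L i → W i (L i - 2) + W i (L i - 1) ≠ ∑ j, W j (L j - 1)) := by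
  constructor
  · intro h
    refine ⟨fun i hi => ?_, fun i hi => ?_, fun i m hm => ?_, fun i hi => ?_⟩
    · have := h i 0 (by omega)
      rwa [blockSum_zero, zero_add, ← hi, blockSum_self (by omega)] at this
    · simpa [blockSum_zero, blockSum_of_lt one_ne_zero hi] using h i 0 (by omega)
    · have := h i (m + 1) (by omega)
      rw [blockSum_of_lt (by omega) (by omega), blockSum_of_lt (by omega) hm] at this
      rw [show m + 2 - 1 = m + 1 by omega, Nat.add_sub_cancel] at this
      omega
    · have := h i (L i - 1) (by omega)
      rwa [blockSum_of_lt (by omega) (by omega), Nat.sub_add_cancel (hL i),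
        blockSum_self (by omega), show L i - 1 - 1 = L i - 2 by omega] at this
  · rintro ⟨hshort, hfirst, hinner, hlast⟩ i m hm
    rcases Nat.eq_zero_or_pos m with rfl | hm₀
    · rw [blockSum_zero, zero_add]
      rcases (hL i).eq_or_lt with hi | hi
      · rw [hi, blockSum_self (by omega)]
        exact hshort i hi.symm
      · rw [blockSum_of_lt one_ne_zero hi]
        exact hfirst i hi
    rw [blockSum_of_lt hm₀.ne' hm]
    rcases (show m + 1 ≤ L i from hm).eq_or_lt with hi | hi
    · rw [hi, blockSum_self (by omega), show m - 1 = L i - 2 by omega, show m = L i - 1 by omega]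
      exact hlast i (by omega)
    · rw [blockSum_of_lt (by omega) hi, Nat.add_sub_cancel]
      have := hinner i (m - 1) (by omega)
      rw [show m - 1 + 2 = m + 1 by omega] at this
      omega

theorem exists_isProperPathWeighting_one_iff (hs : s ≠ 2) (hL : ∀ i, 1 ≤ L i) :
    (∃ W, IsProperPathWeighting L 1 W) ↔ ∀ i, L i = 2 := by
  constructor
  · rintro ⟨W, hW⟩ i
    have hW₁ : ∀ i, ∀ m < L i, W i m = 1 := fun i m hm => by
      simpa using hW.weight_mem i m hm
    obtain ⟨hshort, -, hinner, -⟩ := (blockSum_ne_iff hL).1 hW.blockSum_ne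
    by_contra hi
    rcases (hL i).eq_or_lt with hi₁ | hi₁
    · refine hshort i hi₁.symm (sum_congr rfl fun j _ => ?_)
      rw [hW₁ j 0 (hL j), hW₁ j _ (by have := hL j; omega)]
    · exact hinner i 0 (by omega) (by rw [hW₁ i 0 (by omega), hW₁ i 2 (by omega)])
  · intro h₂
    refine ⟨fun _ _ => 1, fun _ _ _ => by simp, (blockSum_ne_iff hL).2 ⟨?_, ?_, ?_, ?_⟩⟩
    · intro i hi; have := h₂ i; omega
    · intro i _; simpa using hs
    · intro i m hm; have := h₂ i; omega
    · intro i _; simpa using Ne.symm hs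

theorem IsProperPathWeighting.weight_add_two (h : IsProperPathWeighting L 2 W)
    (hL : ∀ i, 1 ≤ L i) {i : Fin s} {m : ℕ} (hm : m + 2 < L i) :
    W i (m + 2) = 3 - W i m := by
  have h₀ := mem_Icc.1 (h.weight_mem i m (by omega))
  have h₂ := mem_Icc.1 (h.weight_mem i (m + 2) hm)
  have := ((blockSum_ne_iff hL).1 h.blockSum_ne).2.2.1 i m hm
  omega

theorem IsProperPathWeighting.weight_last_eq_first (h : IsProperPathWeighting L 2 W)
    (hL : ∀ i, 1 ≤ L i) {i : Fin s} (hi : L i % 4 = 1) :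
    W i (L i - 1) = W i 0 := by
  have period : ∀ n, 4 * n < L i → W i (4 * n) = W i 0 := by
    intro n
    induction n with
    | zero => intro; rfl
    | succ n ih =>
      intro hn
      have h₀ := mem_Icc.1 (h.weight_mem i (4 * n) (by omega))
      rw [show 4 * (n + 1) = 4 * n + 2 + 2 by ring, h.weight_add_two hL (by omega),
        h.weight_add_two hL (by omega), ← ih (by omega)]
      omega
  rw [show L i - 1 = 4 * ((L i - 1) / 4) by omega]
  exact period _ (by omega)

theorem not_isProperPathWeighting_two (hL : ∀ i, 1 ≤ L i) (hmod : ∀ i, L i % 4 = 1)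
    {i₀ : Fin s} (h₀ : L i₀ = 1) : ¬ IsProperPathWeighting L 2 W := fun h =>
  ((blockSum_ne_iff hL).1 h.blockSum_ne).1 i₀ h₀
    (sum_congr rfl fun i _ => (h.weight_last_eq_first hL (hmod i)).symm)

/-- The 4-periodic sequence `a, b, 3 - a, 3 - b, …`; by `weight_add_two`, a proper path weighting
with weights in `{1, 2}` follows such a sequence along each path. -/
def flipPattern (a b m : ℕ) : ℕ :=
  if m % 4 = 0 then a else if m % 4 = 1 then b else if m % 4 = 2 then 3 - a else 3 - b

theorem flipPattern_mem {a b : ℕ} (ha : a ∈ Icc 1 2) (hb : b ∈ Icc 1 2) (m : ℕ) :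
    flipPattern a b m ∈ Icc 1 2 := by
  simp only [mem_Icc] at *
  unfold flipPattern
  split_ifs <;> omega

theorem flipPattern_ne_add_two (a b m : ℕ) : flipPattern a b m ≠ flipPattern a b (m + 2) := by
  unfold flipPattern
  split_ifs <;> omega

theorem exists_isProperPathWeighting_three (hs : 3 ≤ s) {i₀ : Fin s} (h₀ : L i₀ = 1)
    (h₂ : ∀ i ≠ i₀, 2 ≤ L i) : ∃ W, IsProperPathWeighting L 3 W := by
  have hL : ∀ i, 1 ≤ L i := fun i => by
    by_cases hi : i = i₀
    · rw [hi, h₀]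
    · linarith [h₂ i hi]
  have : Nontrivial (Fin s) := Fin.nontrivial_iff_two_le.2 (by omega)
  obtain ⟨i₁, hi₁⟩ := exists_ne i₀
  -- Weight `3` on the single edge of path `i₀` lifts the sum at `x` above every interior block
  -- sum; a second `3` on the last edge of path `i₁` separates the sums at `x` and at `y`.
  let W (i : Fin s) (m : ℕ) : ℕ :=
    if i = i₀ then 3 else if i = i₁ ∧ m = L i - 1 then 3 else flipPattern 1 1 m
  have hpat : ∀ m, flipPattern 1 1 m ∈ Icc 1 2 := flipPattern_mem (by simp) (by simp)
  have hW_mem : ∀ i m, W i m ∈ Icc 1 3 := fun i m => by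
    have := mem_Icc.1 (hpat m)
    simp only [W, mem_Icc]; split_ifs <;> omega
  have hW_pat : ∀ i ≠ i₀, ∀ m < L i - 1, W i m = flipPattern 1 1 m := fun i hi m hm => by
    simp only [W, if_neg hi, show ¬ (i = i₁ ∧ m = L i - 1) by omega, if_false]
  have hW_zero : ∀ i ≠ i₀, W i 0 = 1 := fun i hi => hW_pat i hi 0 (by have := h₂ i hi; omega)
  have hfirst : ∑ j, W j 0 = s + 2 := by
    have (j : Fin s) : W j 0 = 1 + if j = i₀ then 2 else 0 := by
      by_cases hj : j = i₀
      · simp [W, hj]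
      · rw [hW_zero j hj, if_neg hj]
    simp [this, sum_add_distrib]
  have hlast : ∑ j, W j 0 < ∑ j, W j (L j - 1) := by
    refine sum_lt_sum (fun j _ => ?_) ⟨i₁, mem_univ _, ?_⟩
    · by_cases hj : j = i₀
      · simp [W, hj]
      · exact hW_zero j hj ▸ (mem_Icc.1 (hW_mem j _)).1
    · simp [hW_zero i₁ hi₁, W, hi₁]
  have hne : ∀ i, 2 ≤ L i → i ≠ i₀ := fun i hi h => by rw [h, h₀] at hi; omega
  refine ⟨W, fun i m _ => hW_mem i m, (blockSum_ne_iff hL).2 ⟨?_, ?_, ?_, ?_⟩⟩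
  · exact fun _ _ => hlast.ne
  · intro i hi
    have := mem_Icc.1 (hW_mem i 1)
    rw [hfirst, hW_zero i (hne i hi)]
    omega
  · intro i m hm
    rw [hW_pat i (hne i (by omega)) m (by omega)]
    have := mem_Icc.1 (hpat m)
    simp only [W, if_neg (hne i (by omega))]
    split_ifs
    · omega
    · exact flipPattern_ne_add_two 1 1 m
  · intro i hi
    rw [hW_pat i (hne i hi) _ (by omega)]
    have := mem_Icc.1 (hpat (L i - 2))
    have := mem_Icc.1 (hW_mem i (L i - 1))
    omega

theorem isProperPathWeighting_flipPattern (hL : ∀ i, 1 ≤ L i) {a b : Fin s → ℕ}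
    (ha : ∀ i, a i ∈ Icc 1 2) (hb : ∀ i, b i ∈ Icc 1 2)
    (hshort : ∀ i, L i = 1 → ∑ j, a j ≠ ∑ j, flipPattern (a j) (b j) (L j - 1))
    (hfirst : ∀ i, 2 ≤ L i → ∑ j, a j ≠ a i + b i)
    (hlast : ∀ i, 2 ≤ L i → flipPattern (a i) (b i) (L i - 2) + flipPattern (a i) (b i) (L i - 1)
      ≠ ∑ j, flipPattern (a j) (b j) (L j - 1)) :
    IsProperPathWeighting L 2 fun i => flipPattern (a i) (b i) := by
  have h₀ (i : Fin s) : flipPattern (a i) (b i) 0 = a i := rfl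
  have h₁ (i : Fin s) : flipPattern (a i) (b i) 1 = b i := rfl
  refine ⟨fun i m _ => flipPattern_mem (ha i) (hb i) m, (blockSum_ne_iff hL).2 ⟨?_, ?_, ?_, hlast⟩⟩
  · simpa only [h₀] using hshort
  · simpa only [h₀, h₁] using hfirst
  · exact fun i m _ => flipPattern_ne_add_two _ _ m

theorem exists_isProperPathWeighting_two_of_mod_four_eq_three (hs : 3 ≤ s) (hL : ∀ i, 1 ≤ L i)
    (hshort : ∀ i, L i = 1 → ∃ j, L j % 4 = 3)
    (htwo : ∀ j, L j % 4 = 2 → ∃ i ≠ j, L i % 4 ≠ 3) : ∃ W, IsProperPathWeighting L 2 W := by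
  let b (i : Fin s) : ℕ := if L i % 4 = 3 ∨ L i % 4 = 0 then 1 else 2
  have hb (i : Fin s) : b i ∈ Icc 1 2 := by simp only [b]; split_ifs <;> simp
  have hlast (i : Fin s) : flipPattern 2 (b i) (L i - 1) = if L i % 4 ≠ 3 then 2 else 1 := by
    have := hL i; simp only [flipPattern, b]; split_ifs <;> omega
  have hpair (i : Fin s) (hi : 2 ≤ L i) :
      flipPattern 2 (b i) (L i - 2) + flipPattern 2 (b i) (L i - 1) =
        if L i % 4 = 3 then 2 else if L i % 4 = 2 then 4 else 3 := by
    simp only [flipPattern, b]; split_ifs <;> omega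
  set N := #{i | L i % 4 ≠ 3}
  have hSY : ∑ j, flipPattern 2 (b j) (L j - 1) = s + N := by
    simp only [hlast, sum_ite_two_one, Fintype.card_fin, N]
  refine ⟨_, isProperPathWeighting_flipPattern hL (a := fun _ => 2) (fun _ => by simp) hb
    (fun i hi => ?_) (fun i _ => ?_) (fun i hi => ?_)⟩
  · obtain ⟨j, hj⟩ := hshort i hi
    have : N < s := by simpa using card_lt_univ_of_notMem (x := j) (by simp [hj])
    simp only [sum_const, card_univ, Fintype.card_fin, smul_eq_mul, hSY]
    omega
  · have := mem_Icc.1 (hb i)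
    simp only [sum_const, card_univ, Fintype.card_fin, smul_eq_mul]
    omega
  · rw [hSY, hpair i hi]
    split_ifs with h₃ h₂
    · omega
    · obtain ⟨i', hi', h₃'⟩ := htwo i h₂
      have : 1 < N := one_lt_card.2 ⟨i, by simp [h₃], i', by simp [h₃'], hi'.symm⟩
      omega
    · have : 0 < N := card_pos.2 ⟨i, by simp [h₃]⟩
      omega

theorem exists_isProperPathWeighting_two_of_even (hs : 3 ≤ s) (hL : ∀ i, 1 ≤ L i) {j : Fin s}
    (hj : L j % 2 = 0) (h₃ : ∀ i, L i % 4 ≠ 3) : ∃ W, IsProperPathWeighting L 2 W := by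
  let b (i : Fin s) : ℕ :=
    if i = j then (if L i % 4 = 2 then 1 else 2) else (if L i % 4 = 0 then 1 else 2)
  have hb (i : Fin s) : b i ∈ Icc 1 2 := by simp only [b]; split_ifs <;> simp
  have hlast (i : Fin s) : flipPattern 2 (b i) (L i - 1) = if i ≠ j then 2 else 1 := by
    have := hL i
    have := h₃ i
    by_cases hij : i = j
    · subst hij; simp only [flipPattern, b]; split_ifs <;> omega
    · simp only [flipPattern, b]; split_ifs <;> omega
  have hSY : ∑ i, flipPattern 2 (b i) (L i - 1) = s + (s - 1) := by
    simp only [hlast]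
    rw [sum_ite_two_one]
    simp [filter_ne']
  have hpair (i : Fin s) :
      flipPattern 2 (b i) (L i - 2) + flipPattern 2 (b i) (L i - 1) ≤ 4 := by
    have := mem_Icc.1 (flipPattern_mem (show 2 ∈ Icc 1 2 by simp) (hb i) (L i - 2))
    have := mem_Icc.1 (flipPattern_mem (show 2 ∈ Icc 1 2 by simp) (hb i) (L i - 1))
    omega
  refine ⟨_, isProperPathWeighting_flipPattern hL (a := fun _ => 2) (fun _ => by simp) hb
    (fun i _ => ?_) (fun i _ => ?_) (fun i _ => ?_)⟩
  · simp only [sum_const, card_univ, Fintype.card_fin, smul_eq_mul, hSY]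
    omega
  · have := mem_Icc.1 (hb i)
    simp only [sum_const, card_univ, Fintype.card_fin, smul_eq_mul]
    omega
  · have := hpair i
    omega

theorem exists_isProperPathWeighting_two_of_others_mod_four_eq_three (hs : 3 ≤ s)
    (hL : ∀ i, 1 ≤ L i) {j : Fin s} (hj : L j % 4 = 2) (h₃ : ∀ i ≠ j, L i % 4 = 3) :
    ∃ W, IsProperPathWeighting L 2 W := by
  let a (i : Fin s) : ℕ := if i ≠ j then 2 else 1
  have ha (i : Fin s) : a i ∈ Icc 1 2 := by simp only [a]; split_ifs <;> simp
  have hb (i : Fin s) : 3 - a i ∈ Icc 1 2 := by simp only [a]; split_ifs <;> simp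
  have hlast (i : Fin s) : flipPattern (a i) (3 - a i) (L i - 1) = if i = j then 2 else 1 := by
    have := hL i
    by_cases hij : i = j
    · subst hij; simp only [flipPattern, a]; split_ifs <;> omega
    · have := h₃ i hij; simp only [flipPattern, a]; split_ifs <;> omega
  have hSX : ∑ i, a i = s + (s - 1) := by
    rw [sum_ite_two_one]
    simp [filter_ne']
  have hSY : ∑ i, flipPattern (a i) (3 - a i) (L i - 1) = s + 1 := by
    simp only [hlast]
    rw [sum_ite_two_one]
    simp [filter_eq']
  have hpair (i : Fin s) : flipPattern (a i) (3 - a i) (L i - 2)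
      + flipPattern (a i) (3 - a i) (L i - 1) ≤ 3 := by
    have := hL i
    by_cases hij : i = j
    · subst hij; simp only [flipPattern, a]; split_ifs <;> omega
    · have := h₃ i hij; simp only [flipPattern, a]; split_ifs <;> omega
  refine ⟨_, isProperPathWeighting_flipPattern hL ha hb (fun i hi => ?_) (fun i _ => ?_)
    (fun i _ => ?_)⟩
  · by_cases hij : i = j
    · rw [hij] at hi; omega
    · have := h₃ i hij; omega
  · have := mem_Icc.1 (ha i)
    omega
  · have := hpair i
    omega

theorem exists_isProperPathWeighting_two (hs : 3 ≤ s) (hL : ∀ i, 1 ≤ L i)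
    (h : ∀ i₀, L i₀ = 1 → ∃ i ≠ i₀, L i % 4 ≠ 1) : ∃ W, IsProperPathWeighting L 2 W := by
  by_cases hexc : ∃ j, L j % 4 = 2 ∧ ∀ i ≠ j, L i % 4 = 3
  · obtain ⟨j, hj, h₃⟩ := hexc
    exact exists_isProperPathWeighting_two_of_others_mod_four_eq_three hs hL hj h₃
  push Not at hexc
  by_cases hshort : ∀ i, L i = 1 → ∃ j, L j % 4 = 3
  · exact exists_isProperPathWeighting_two_of_mod_four_eq_three hs hL hshort hexc
  push Not at hshort
  obtain ⟨i₀, h₀, h₃⟩ := hshort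
  obtain ⟨j, -, hj⟩ := h i₀ h₀
  exact exists_isProperPathWeighting_two_of_even hs hL (j := j) (by have := h₃ j; omega) h₃

theorem isLeast_isProperPathWeighting {n : ℕ} (hn : 0 < n) (hW : IsProperPathWeighting L n W)
    (hmin : ∀ W, ¬ IsProperPathWeighting L (n - 1) W) :
    IsLeast {k | 0 < k ∧ ∃ W, IsProperPathWeighting L k W} n :=
  ⟨⟨hn, W, hW⟩, fun k ⟨_, W', hW'⟩ => not_lt.1 fun hk => hmin W' (hW'.mono (by omega))⟩

end PathWeighting

section Hypergraph

variable {t s : ℕ} {L : Fin s → ℕ}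

/-- The block of path `i` containing a vertex; `none` for the inner vertices of other paths. -/
def block (i : Fin s) : ThetaVert (2 * t) t s L → Option ℕ
  | .inl (.inl _) => some 0
  | .inl (.inr _) => some (L i)
  | .inr ⟨j, c⟩ => if j = i then some (c / t + 1) else none

theorem thetaMem_iff (ht : 0 < t) (i : Fin s) (m : ℕ) :
    ∀ v, thetaMem (2 * t) t L i m v ↔ block i v = some m ∨ block i v = some (m + 1)
  | .inl (.inl a) => by
    rw [thetaMem, block, two_mul, Nat.add_sub_cancel, ← two_mul, mul_le_and_lt_add_two_mul_iff ht,
      Nat.div_eq_of_lt a.2]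
    simp only [Option.some.injEq]
  | .inl (.inr b) => by
    rw [thetaMem, block, two_mul, Nat.add_sub_cancel, ← two_mul, mul_le_and_lt_add_two_mul_iff ht,
      add_comm, Nat.add_mul_div_right _ _ ht, Nat.div_eq_of_lt b.2, zero_add]
    simp only [Option.some.injEq]
  | .inr ⟨j, c⟩ => by
    rw [thetaMem, block]
    generalize (c : ℕ) = n
    rw [two_mul, Nat.add_sub_cancel, ← two_mul, mul_le_and_lt_add_two_mul_iff ht, add_comm t,
      Nat.add_div_right _ ht]
    split_ifs with h <;> simp [h]

theorem exists_block_eq_of_lt (ht : 0 < t) {i : Fin s} {b : ℕ} (hb₀ : 0 < b) (hb : b < L i) :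
    ∃ v : ThetaVert (2 * t) t s L, block i v = some b ∧ ∀ j ≠ i, block j v = none := by
  have hc : (b - 1) * t < L i * (2 * t - t) - t := by
    have := Nat.mul_lt_mul_of_pos_right (show b - 1 < L i - 1 by omega) ht
    rw [Nat.sub_one_mul (L i)] at this
    rw [show 2 * t - t = t by omega]
    omega
  refine ⟨.inr ⟨i, ⟨(b - 1) * t, hc⟩⟩, ?_, fun j hj => if_neg hj.symm⟩
  simp [block, Nat.mul_div_cancel _ ht, Nat.sub_add_cancel hb₀]

theorem exists_block_eq (ht : 0 < t) {i : Fin s} {b : ℕ} (hb : b ≤ L i) :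
    ∃ v : ThetaVert (2 * t) t s L, block i v = some b := by
  rcases Nat.eq_zero_or_pos b with rfl | hb₀
  · exact ⟨.inl (.inl ⟨0, ht⟩), rfl⟩
  rcases hb.lt_or_eq with hb | rfl
  · exact (exists_block_eq_of_lt ht hb₀ hb).imp fun _ => And.left
  · exact ⟨.inl (.inr ⟨0, ht⟩), rfl⟩

open Classical in
noncomputable def pathEdge (p : Σ i : Fin s, Fin (L i)) : Finset (ThetaVert (2 * t) t s L) :=
  univ.filter (thetaMem (2 * t) t L p.1 p.2)

theorem thetaEdges_eq_image :
    thetaEdges (2 * t) t L = univ.image (pathEdge (t := t) (L := L)) := rfl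

theorem mem_pathEdge (ht : 0 < t) {p : Σ i : Fin s, Fin (L i)} {v : ThetaVert (2 * t) t s L} :
    v ∈ pathEdge p ↔ block p.1 v = some (p.2 : ℕ) ∨ block p.1 v = some (p.2 + 1 : ℕ) := by
  simp [pathEdge, thetaMem_iff ht]

theorem pathEdge_injective (ht : 0 < t) (hL : ∀ i, 1 ≤ L i)
    (hone : ∀ i j, L i = 1 → L j = 1 → i = j) :
    Function.Injective (pathEdge (t := t) (L := L)) := by
  have fst_eq : ∀ {i : Fin s} {m : Fin (L i)} {q : Σ i : Fin s, Fin (L i)},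
      pathEdge (t := t) ⟨i, m⟩ = pathEdge q → 2 ≤ L i → i = q.1 := by
    intro i m q h hi
    obtain ⟨v, hv, hv'⟩ := exists_block_eq_of_lt (t := t) ht
      (show 0 < max (m : ℕ) 1 by omega) (show max (m : ℕ) 1 < L i by have := m.2; omega)
    have hmem : v ∈ pathEdge q := by
      rw [← h, mem_pathEdge ht, hv]; simp only [Option.some.injEq]; omega
    by_contra hne
    rw [mem_pathEdge ht, hv' _ (Ne.symm hne)] at hmem
    simp at hmem
  rintro ⟨i, m⟩ ⟨j, m'⟩ h
  obtain rfl : i = j := by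
    by_cases hi : 2 ≤ L i
    · exact fst_eq h hi
    by_cases hj : 2 ≤ L j
    · exact (fst_eq h.symm hj).symm
    exact hone i j (by linarith [hL i]) (by linarith [hL j])
  have snd_eq_or_succ : ∀ {m m' : Fin (L i)}, pathEdge (t := t) ⟨i, m⟩ = pathEdge ⟨i, m'⟩ →
      (m : ℕ) = m' ∨ (m : ℕ) = m' + 1 := by
    intro m m' h
    obtain ⟨v, hv⟩ := exists_block_eq (t := t) ht m.2.le
    have hmem : v ∈ pathEdge ⟨i, m⟩ := (mem_pathEdge ht).2 (.inl hv)
    rw [h, mem_pathEdge ht, hv] at hmem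
    simpa using hmem
  have h₁ := snd_eq_or_succ h
  have h₂ := snd_eq_or_succ h.symm
  obtain rfl : m = m' := Fin.ext (by omega)
  rfl

theorem sigmaE_eq_sum (ht : 0 < t) (hL : ∀ i, 1 ≤ L i)
    (hone : ∀ i j, L i = 1 → L j = 1 → i = j) {w : Finset (ThetaVert (2 * t) t s L) → ℕ}
    {W : Fin s → ℕ → ℕ} (hw : ∀ p, w (pathEdge p) = W p.1 p.2) (v : ThetaVert (2 * t) t s L) :
    sigmaE (thetaEdges (2 * t) t L) w v = ∑ j, ∑ m ∈ range (L j),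
      if block j v = some m ∨ block j v = some (m + 1) then W j m else 0 := by
  classical
  rw [sigmaE, thetaEdges_eq_image, sum_filter,
    sum_image fun p _ q _ h => pathEdge_injective ht hL hone h, Fintype.sum_sigma]
  refine sum_congr rfl fun j _ => ?_
  rw [← Fin.sum_univ_eq_sum_range
    (fun m => if block j v = some m ∨ block j v = some (m + 1) then W j m else 0)]
  refine sum_congr rfl fun m _ => ?_
  simp only [hw, mem_pathEdge ht]

theorem sum_range_ite_eq_or_eq_succ (f : ℕ → ℕ) {n b : ℕ} (hn : 0 < n) (hb : b ≤ n) :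
    (∑ m ∈ range n, if b = m ∨ b = m + 1 then f m else 0) =
      if b = 0 then f 0 else if b = n then f (n - 1) else f (b - 1) + f b := by
  split_ifs with h₀ hbn
  · rw [sum_eq_single_of_mem 0 (by simpa using hn) fun m _ hm => if_neg (by omega),
      if_pos (by omega)]
  · rw [sum_eq_single_of_mem (n - 1) (by simp; omega) fun m hm hm' => if_neg (by simp at hm; omega),
      if_pos (by omega)]
  · rw [sum_eq_add_of_mem (b - 1) b (by simp; omega) (by simp; omega) (by omega)
      fun m _ hm => if_neg (by omega), if_pos (by omega), if_pos (by omega)]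

theorem sigmaE_eq_blockSum (ht : 0 < t) (hL : ∀ i, 1 ≤ L i)
    (hone : ∀ i j, L i = 1 → L j = 1 → i = j) {w : Finset (ThetaVert (2 * t) t s L) → ℕ}
    {W : Fin s → ℕ → ℕ} (hw : ∀ p, w (pathEdge p) = W p.1 p.2) {i : Fin s} {b : ℕ}
    {v : ThetaVert (2 * t) t s L} (hv : block i v = some b) :
    sigmaE (thetaEdges (2 * t) t L) w v = blockSum L W i b := by
  rw [sigmaE_eq_sum ht hL hone hw]
  have hL₀ : ∀ j, L j ≠ 0 := fun j => Nat.one_le_iff_ne_zero.1 (hL j)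
  rcases v with (a | a) | ⟨j, c⟩
  · obtain rfl : b = 0 := by simpa [block] using hv.symm
    simp only [block, Option.some.injEq, sum_range_ite_eq_or_eq_succ _ (hL _) (Nat.zero_le _)]
    simp [blockSum]
  · obtain rfl : b = L i := by simpa [block] using hv.symm
    simp only [block, Option.some.injEq, sum_range_ite_eq_or_eq_succ _ (hL _) le_rfl]
    simp [blockSum, hL₀]
  · obtain ⟨rfl, rfl⟩ : j = i ∧ c / t + 1 = b := by simpa [block] using hv
    have hc : c / t + 1 < L j := by
      have h := c.2
      generalize (c : ℕ) = n at h
      rw [show 2 * t - t = t by omega, ← Nat.sub_one_mul] at h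
      exact Nat.add_lt_of_lt_sub ((Nat.div_lt_iff_lt_mul ht).2 h)
    rw [Fintype.sum_eq_single j fun x hx => by simp [block, Ne.symm hx]]
    simp only [block, if_pos, Option.some.injEq, sum_range_ite_eq_or_eq_succ _ (hL _) hc.le]
    simp [blockSum, hc.ne]

theorem exists_mem_pathEdge_block_eq (ht : 0 < t) (p : Σ i : Fin s, Fin (L i)) {b : ℕ}
    (hb : b = p.2 ∨ b = p.2 + 1) :
    ∃ v ∈ pathEdge (t := t) p, block p.1 v = some b := by
  obtain ⟨v, hv⟩ := exists_block_eq (L := L) ht (show b ≤ L p.1 by have := p.2.2; omega)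
  exact ⟨v, (mem_pathEdge ht).2 (by rw [hv]; simpa using hb), hv⟩

theorem hasNSDEdgeWeighting_thetaEdges_iff (ht : 0 < t) (hL : ∀ i, 1 ≤ L i)
    (hone : ∀ i j, L i = 1 → L j = 1 → i = j) (k : ℕ) :
    HasNSDEdgeWeighting (thetaEdges (2 * t) t L) k ↔ ∃ W, IsProperPathWeighting L k W := by
  have pathEdge_mem (p) : pathEdge p ∈ thetaEdges (2 * t) t L := mem_image_of_mem _ (mem_univ p)
  constructor
  · rintro ⟨w, hwk, hw⟩
    let W (i : Fin s) (m : ℕ) : ℕ := if h : m < L i then w (pathEdge ⟨i, ⟨m, h⟩⟩) else 0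
    have hW (p : Σ i : Fin s, Fin (L i)) : w (pathEdge p) = W p.1 p.2 := by
      simp only [W, dif_pos p.2.2]
    refine ⟨W, fun i m hm => ?_, fun i m hm hB => ?_⟩
    · rw [mem_Icc, ← hW ⟨i, ⟨m, hm⟩⟩]
      exact hwk _ (pathEdge_mem _)
    let p : Σ i : Fin s, Fin (L i) := ⟨i, ⟨m, hm⟩⟩
    obtain ⟨u, hu, hbu⟩ := exists_mem_pathEdge_block_eq ht p (.inl rfl)
    obtain ⟨v, hv, hbv⟩ := exists_mem_pathEdge_block_eq ht p (.inr rfl)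
    have hcard : 2 ≤ (pathEdge p).card :=
      one_lt_card.2 ⟨u, hu, v, hv, fun h => by simp [h, hbv] at hbu⟩
    have hσ : ∀ z ∈ pathEdge p, sigmaE (thetaEdges (2 * t) t L) w z = blockSum L W i m := by
      intro z hz
      rcases (mem_pathEdge ht).1 hz with h | h
      · exact sigmaE_eq_blockSum ht hL hone hW h
      · exact (sigmaE_eq_blockSum ht hL hone hW h).trans hB.symm
    obtain ⟨x, hx, y, hy, hxy⟩ := hw _ (pathEdge_mem p) hcard
    exact hxy ((hσ x hx).trans (hσ y hy).symm)
  · rintro ⟨W, hWk, hW⟩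
    set w := Function.extend pathEdge (fun p => W p.1 p.2) fun _ => 1
    have hw (p : Σ i : Fin s, Fin (L i)) : w (pathEdge p) = W p.1 p.2 :=
      (pathEdge_injective ht hL hone).extend_apply _ _ p
    refine ⟨w, ?_, ?_⟩
    · rintro e he
      obtain ⟨p, -, rfl⟩ := mem_image.1 (thetaEdges_eq_image ▸ he)
      rw [hw]
      exact mem_Icc.1 (hWk _ _ p.2.2)
    · rintro e he -
      obtain ⟨p, -, rfl⟩ := mem_image.1 (thetaEdges_eq_image ▸ he)
      obtain ⟨u, hu, hbu⟩ := exists_mem_pathEdge_block_eq ht p (.inl rfl)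
      obtain ⟨v, hv, hbv⟩ := exists_mem_pathEdge_block_eq ht p (.inr rfl)
      refine ⟨u, hu, v, hv, ?_⟩
      rw [sigmaE_eq_blockSum ht hL hone hw hbu, sigmaE_eq_blockSum ht hL hone hw hbv]
      exact hW _ _ p.2.2

end Hypergraph

end Theta

/-- For `r` even, `s ≥ 3`, `t = r/2`, and the `r`-uniform theta hypergraph
`H = Θ_t^r(ℓ_1,…,ℓ_s)` with `ℓ_1 ≤ ℓ_2 ≤ … ≤ ℓ_s`: `χ^e(H) = 3` if `ℓ_1 = 1`
and `ℓ_i ≡ 1 (mod 4)` for all `i ≥ 2`; `χ^e(H) = 1` if all `ℓ_i = 2`; and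
`χ^e(H) = 2` otherwise. -/
theorem chiE_theta_half (r t s : ℕ) (L : Fin s → ℕ) (hr : r = 2 * t) (hs : 3 ≤ s)
    (ht : 1 ≤ t)
    (hL : ∀ i, t ≤ L i * (r - t))
    (hone : ∀ i j, L i = 1 → L j = 1 → i = j)
    (hmono : ∀ i j : Fin s, i ≤ j → L i ≤ L j) :
    ((L ⟨0, by omega⟩ = 1 ∧ ∀ i : Fin s, (i : ℕ) ≠ 0 → L i % 4 = 1) →
      IsLeast {k : ℕ | 0 < k ∧ HasNSDEdgeWeighting (thetaEdges r t L) k} 3) ∧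
    ((∀ i, L i = 2) →
      IsLeast {k : ℕ | 0 < k ∧ HasNSDEdgeWeighting (thetaEdges r t L) k} 1) ∧
    ((¬(L ⟨0, by omega⟩ = 1 ∧ ∀ i : Fin s, (i : ℕ) ≠ 0 → L i % 4 = 1) ∧
        ¬(∀ i, L i = 2)) →
      IsLeast {k : ℕ | 0 < k ∧ HasNSDEdgeWeighting (thetaEdges r t L) k} 2) := by
  open Theta in
  subst hr
  have hL1 : ∀ i, 1 ≤ L i := fun i => Nat.pos_of_ne_zero fun h => by
    have := hL i
    rw [h, zero_mul] at this
    omega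
  simp only [hasNSDEdgeWeighting_thetaEdges_iff ht hL1 hone]
  set i₀ : Fin s := ⟨0, by omega⟩
  have eq_i₀ : ∀ i, L i = 1 → L i₀ = 1 → i = i₀ := fun i hi h₀ => hone i i₀ hi h₀
  refine ⟨fun ⟨h₀, hmod⟩ => ?_, fun h₂ => ?_, fun ⟨hn₁, hn₂⟩ => ?_⟩
  · have hne : ∀ i ≠ i₀, 2 ≤ L i := fun i hi =>
      (hL1 i).lt_of_ne fun h => hi (eq_i₀ i h.symm h₀)
    obtain ⟨W, hW⟩ := exists_isProperPathWeighting_three hs h₀ hne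
    refine isLeast_isProperPathWeighting (by norm_num) hW fun W' =>
      not_isProperPathWeighting_two hL1 (fun i => ?_) h₀
    by_cases hi : i = i₀
    · rw [hi, h₀]
    · exact hmod i fun h => hi (Fin.ext h)
  · obtain ⟨W, hW⟩ := (exists_isProperPathWeighting_one_iff (by omega) hL1).2 h₂
    exact isLeast_isProperPathWeighting one_pos hW fun _ => not_isProperPathWeighting_zero (hL1 i₀)
  · have h : ∀ i, L i = 1 → ∃ j ≠ i, L j % 4 ≠ 1 := by
      intro i hi
      have h₀ : L i₀ = 1 := le_antisymm (hi ▸ hmono i₀ i (Nat.zero_le i.val)) (hL1 i₀)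
      obtain rfl := eq_i₀ i hi h₀
      push Not at hn₁
      obtain ⟨j, hj, hj'⟩ := hn₁ h₀
      exact ⟨j, fun h => hj (congrArg Fin.val h), hj'⟩
    obtain ⟨W, hW⟩ := exists_isProperPathWeighting_two hs hL1 h
    exact isLeast_isProperPathWeighting two_pos hW fun W' hW' =>
      hn₂ ((exists_isProperPathWeighting_one_iff (by omega) hL1).1 ⟨W', hW'⟩)
end

section
/- Let q ≥ 2 and let H be a projective plane of order q, regarded as a hypergraph. Then χ^e(H) = 2. -/
open Finset

lemma sigmaE_eq {V : Type*} [Fintype V] [DecidableEq V] (E : Finset (Finset V))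
    (w : Finset V → ℕ) (v : V) :
    sigmaE E w v = ∑ e ∈ E.filter (fun e => v ∈ e), w e := by
  rw [sigmaE]
  exact Finset.sum_congr (Finset.filter_congr_decidable _ _ _) (fun _ _ => rfl)

/-- For `q ≥ 2` and a projective plane of order `q` (with point set `X` and line
set `L`), regarded as a hypergraph, `χ^e = 2`. -/
theorem chiE_projectivePlane (q : ℕ) (hq : 2 ≤ q) (X : Type*) [Fintype X] [DecidableEq X]
    (L : Finset (Finset X))
    (hpts : Fintype.card X = q ^ 2 + q + 1)
    (hlines : L.card = q ^ 2 + q + 1)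
    (hlinecard : ∀ l ∈ L, l.card = q + 1)
    (hdeg : ∀ x : X, (L.filter (fun l => x ∈ l)).card = q + 1)
    (hjoin : ∀ x y : X, x ≠ y → ∃! l, l ∈ L ∧ x ∈ l ∧ y ∈ l)
    (hmeet : ∀ l₁ ∈ L, ∀ l₂ ∈ L, l₁ ≠ l₂ → (l₁ ∩ l₂).card = 1) :
    IsLeast {k : ℕ | 0 < k ∧ HasNSDEdgeWeighting L k} 2 := by
  classical
  have hdeg' : ∀ (w : Finset X → ℕ), ∀ v : X,
      (L.filter (fun e => v ∈ e) : Finset (Finset X)).card = q + 1 := by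
    intro w v
    rw [← hdeg v]
  constructor
  · -- 2 is in the set
    refine ⟨by norm_num, ?_⟩
    have hL2 : 1 < L.card := by rw [hlines]; nlinarith
    obtain ⟨l₀, hl₀, l₁, hl₁, hne⟩ := Finset.one_lt_card.mp hL2
    obtain ⟨p, hp⟩ := Finset.card_eq_one.mp (hmeet l₀ hl₀ l₁ hl₁ hne)
    have hpl₀ : p ∈ l₀ := by
      have : p ∈ l₀ ∩ l₁ := by rw [hp]; exact Finset.mem_singleton_self p
      exact Finset.mem_of_mem_inter_left this
    have hpl₁ : p ∈ l₁ := by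
      have : p ∈ l₀ ∩ l₁ := by rw [hp]; exact Finset.mem_singleton_self p
      exact Finset.mem_of_mem_inter_right this
    set w : Finset X → ℕ := fun l => if l = l₀ ∨ l = l₁ then 2 else 1 with hwdef
    have hwval : ∀ l : Finset X,
        w l = 1 + ((if l = l₀ then 1 else 0) + (if l = l₁ then 1 else 0)) := by
      intro l
      simp only [hwdef]
      by_cases h0 : l = l₀ <;> by_cases h1 : l = l₁
      · exact absurd (h0.symm.trans h1) hne
      · simp [h0, h1, hne, Ne.symm hne]
      · simp [h0, h1, hne, Ne.symm hne]
      · simp [h0, h1]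
    have hsig : ∀ v : X, sigmaE L w v =
        (q + 1) + ((if v ∈ l₀ then 1 else 0) + (if v ∈ l₁ then 1 else 0)) := by
      intro v
      rw [sigmaE_eq]
      calc ∑ e ∈ L.filter (fun e => v ∈ e), w e
          = ∑ e ∈ L.filter (fun e => v ∈ e),
            (1 + ((if e = l₀ then 1 else 0) + (if e = l₁ then 1 else 0))) :=
            Finset.sum_congr rfl (fun e _ => hwval e)
        _ = (L.filter (fun e => v ∈ e)).card
            + ((if l₀ ∈ L.filter (fun e => v ∈ e) then 1 else 0)
              + (if l₁ ∈ L.filter (fun e => v ∈ e) then 1 else 0)) := by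
            rw [Finset.sum_add_distrib, Finset.sum_add_distrib, Finset.sum_const,
              Finset.sum_ite_eq' _ l₀, Finset.sum_ite_eq' _ l₁]
            ring
        _ = (q + 1) + ((if v ∈ l₀ then 1 else 0) + (if v ∈ l₁ then 1 else 0)) := by
            rw [hdeg' w v]
            simp [Finset.mem_filter, hl₀, hl₁]
    refine ⟨w, ?_, ?_⟩
    · intro e _
      by_cases h : e = l₀ ∨ e = l₁ <;> simp [hwdef, h]
    · intro l hl _
      by_cases h0 : l = l₀
      · subst h0
        obtain ⟨v, hv, hvp⟩ : ∃ v ∈ l, v ≠ p := by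
          apply Finset.exists_mem_ne
          rw [hlinecard l hl]; omega
        have hvl₁ : v ∉ l₁ := by
          intro hvl₁
          have : v ∈ l ∩ l₁ := Finset.mem_inter.mpr ⟨hv, hvl₁⟩
          rw [hp] at this
          exact hvp (Finset.mem_singleton.mp this)
        refine ⟨p, hpl₀, v, hv, ?_⟩
        rw [hsig p, hsig v]
        simp [hpl₀, hpl₁, hv, hvl₁]
      by_cases h1 : l = l₁
      · subst h1
        obtain ⟨v, hv, hvp⟩ : ∃ v ∈ l, v ≠ p := by
          apply Finset.exists_mem_ne
          rw [hlinecard l hl]; omega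
        have hvl₀ : v ∉ l₀ := by
          intro hvl₀
          have : v ∈ l₀ ∩ l := Finset.mem_inter.mpr ⟨hvl₀, hv⟩
          rw [hp] at this
          exact hvp (Finset.mem_singleton.mp this)
        refine ⟨p, hpl₁, v, hv, ?_⟩
        rw [hsig p, hsig v]
        simp [hpl₀, hpl₁, hv, hvl₀]
      · -- l distinct from both special lines
        obtain ⟨a, ha⟩ := Finset.card_eq_one.mp (hmeet l hl l₀ hl₀ h0)
        obtain ⟨b, hb⟩ := Finset.card_eq_one.mp (hmeet l hl l₁ hl₁ h1)
        have hal : a ∈ l := by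
          have : a ∈ l ∩ l₀ := by rw [ha]; exact Finset.mem_singleton_self a
          exact Finset.mem_of_mem_inter_left this
        have hal₀ : a ∈ l₀ := by
          have : a ∈ l ∩ l₀ := by rw [ha]; exact Finset.mem_singleton_self a
          exact Finset.mem_of_mem_inter_right this
        have hsub : l.filter (fun x => x ∈ l₀ ∨ x ∈ l₁) ⊆ {a, b} := by
          intro x hx
          rw [Finset.mem_filter] at hx
          obtain ⟨hxl, hx01⟩ := hx
          rcases hx01 with hx0 | hx1
          · have : x ∈ l ∩ l₀ := Finset.mem_inter.mpr ⟨hxl, hx0⟩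
            rw [ha] at this
            simp [Finset.mem_singleton.mp this]
          · have : x ∈ l ∩ l₁ := Finset.mem_inter.mpr ⟨hxl, hx1⟩
            rw [hb] at this
            simp [Finset.mem_singleton.mp this]
        have hlt : (l.filter (fun x => x ∈ l₀ ∨ x ∈ l₁)).card < l.card := by
          have h2 : (l.filter (fun x => x ∈ l₀ ∨ x ∈ l₁)).card ≤ 2 := by
            calc _ ≤ ({a, b} : Finset X).card := Finset.card_le_card hsub
            _ ≤ 2 := (Finset.card_insert_le _ _).trans (by simp)
          rw [hlinecard l hl]; omega
        obtain ⟨c, hcl, hc01⟩ : ∃ c ∈ l, ¬ (c ∈ l₀ ∨ c ∈ l₁) := by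
          by_contra hcon
          push_neg at hcon
          have heq : l.filter (fun x => x ∈ l₀ ∨ x ∈ l₁) = l :=
            Finset.filter_true_of_mem hcon
          have := congrArg Finset.card heq
          omega
        push_neg at hc01
        refine ⟨a, hal, c, hcl, ?_⟩
        rw [hsig a, hsig c]
        simp only [hal₀, hc01.1, hc01.2, if_true, if_false]
        by_cases hab : a ∈ l₁ <;> simp [hab]
  · -- lower bound
    rintro k ⟨hk0, w, hw, hprop⟩
    by_contra hk
    push_neg at hk
    interval_cases k
    have hL : L.Nonempty := by
      rw [← Finset.card_pos, hlines]; positivity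
    obtain ⟨l, hl⟩ := hL
    have hsig1 : ∀ v : X, sigmaE L w v = q + 1 := by
      intro v
      rw [sigmaE_eq]
      calc ∑ e ∈ L.filter (fun e => v ∈ e), w e
          = ∑ _e ∈ L.filter (fun e => v ∈ e), 1 := by
            refine Finset.sum_congr rfl fun e he => ?_
            rw [Finset.mem_filter] at he
            have := hw e he.1
            omega
        _ = (L.filter (fun e => v ∈ e)).card := by simp
        _ = q + 1 := hdeg' w v
    obtain ⟨u, _, v, _, huv⟩ := hprop l hl (by rw [hlinecard l hl]; omega)
    rw [hsig1 u, hsig1 v] at huv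
    exact huv rfl
end
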